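/- For truncation weights w_k = 1/μ for k ≤ μ and w_k = 0 otherwise, with 3 ≤ μ ≤ λ - 2, the Lipschitz constant L₁ = sup_{0<p<1} ((λ-1)/μ) C(λ-2, μ-1) p^{μ-1}(1-p)^{λ-μ-1} satisfies L₁ ≤ ((λ-1)/μ) · ((λ-2)/(2π(μ-1)(λ-μ-1)))^{1/2}. -/

import Mathlib

/-!
With `k = μ - 1`, `m = λ - μ - 1` and `n = k + m`, weighted AM-GM gives
`p^k (1-p)^m ≤ (k/n)^k (m/n)^m`. Writing `j! = s_j · √(2j) (j/e)^j` with `s` the Stirling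
sequence, which decreases to `√π`, we get `s_n ≤ s_k` and `√π ≤ s_m`, hence
`C(n,k) ≤ √(n/(2πkm)) (n/k)^k (n/m)^m`; in the product the powers cancel.
-/

open Real Nat Stirling

theorem factorial_eq_stirlingSeq_mul {n : ℕ} (hn : n ≠ 0) :
    (n ! : ℝ) = stirlingSeq n * (√(2 * n) * (n / exp 1) ^ n) := by
  rw [stirlingSeq, div_mul_cancel₀]
  positivity

theorem stirlingSeq_le_of_le {a b : ℕ} (ha : a ≠ 0) (hab : a ≤ b) :
    stirlingSeq b ≤ stirlingSeq a := by
  obtain ⟨a, rfl⟩ := exists_eq_succ_of_ne_zero ha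
  obtain ⟨b, rfl⟩ := exists_eq_succ_of_ne_zero (by omega : b ≠ 0)
  exact stirlingSeq'_antitone (succ_le_succ_iff.1 hab)

theorem choose_le_sqrt_mul_pow {k m : ℕ} (hk : k ≠ 0) (hm : m ≠ 0) :
    ((k + m).choose k : ℝ) ≤
      √((k + m) / (2 * π * k * m)) * (((k + m) / k) ^ k * ((k + m) / m) ^ m) := by
  set A : ℕ → ℝ := fun j ↦ √(2 * j) * (j / exp 1) ^ j with hA
  have hsk : 0 < stirlingSeq k := (sqrt_pos.2 pi_pos).trans_le (sqrt_pi_le_stirlingSeq hk)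
  have hnum : ((k + m) ! : ℝ) ≤ stirlingSeq k * A (k + m) := by
    rw [factorial_eq_stirlingSeq_mul (by omega)]
    gcongr
    exact stirlingSeq_le_of_le hk (le_add_right k m)
  have hden : stirlingSeq k * A k * (√π * A m) ≤ (k ! * m ! : ℝ) := by
    rw [factorial_eq_stirlingSeq_mul hk, factorial_eq_stirlingSeq_mul hm]
    gcongr
    exact sqrt_pi_le_stirlingSeq hm
  have hsqrt :
      √((k + m) / (2 * π * k * m)) = √(2 * (k + m)) / (√π * √(2 * k) * √(2 * m)) := by
    rw [← sqrt_mul pi_pos.le, ← sqrt_mul (by positivity), ← sqrt_div (by positivity)]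
    congr 1
    field_simp
  calc ((k + m).choose k : ℝ) = ((k + m) ! : ℝ) / (k ! * m !) := cast_add_choose ℝ
    _ ≤ stirlingSeq k * A (k + m) / (stirlingSeq k * A k * (√π * A m)) := by
      gcongr
    _ = √((k + m) / (2 * π * k * m)) * (((k + m) / k) ^ k * ((k + m) / m) ^ m) := by
      rw [hsqrt]
      simp only [hA, cast_add, div_pow, pow_add]
      field_simp

theorem rpow_mul_one_sub_rpow_le {a b p : ℝ} (ha : 0 < a) (hb : 0 < b) (hab : a + b = 1)
    (hp₀ : 0 ≤ p) (hp₁ : p ≤ 1) : p ^ a * (1 - p) ^ b ≤ a ^ a * b ^ b := by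
  have hq₀ : 0 ≤ 1 - p := sub_nonneg.2 hp₁
  have amgm := geom_mean_le_arith_mean2_weighted ha.le hb.le (div_nonneg hp₀ ha.le)
    (div_nonneg hq₀ hb.le) hab
  rw [mul_div_cancel₀ _ ha.ne', mul_div_cancel₀ _ hb.ne', add_sub_cancel, div_rpow hp₀ ha.le,
    div_rpow hq₀ hb.le, ← mul_div_mul_comm, div_le_one (by positivity)] at amgm
  exact amgm

theorem pow_mul_one_sub_pow_le {k m : ℕ} (hk : k ≠ 0) (hm : m ≠ 0) {p : ℝ} (hp₀ : 0 ≤ p)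
    (hp₁ : p ≤ 1) : p ^ k * (1 - p) ^ m ≤ (k / (k + m)) ^ k * (m / (k + m)) ^ m := by
  have hn : (0 : ℝ) < k + m := by positivity
  have h := rpow_mul_one_sub_rpow_le (a := k / (k + m)) (b := m / (k + m)) (by positivity)
    (by positivity) (by field_simp) hp₀ hp₁
  have hpow {x : ℝ} (hx : 0 ≤ x) (j : ℕ) :
      (x ^ ((j : ℝ) / (k + m))) ^ ((k : ℝ) + m) = x ^ j := by
    rw [← rpow_mul hx, div_mul_cancel₀ _ hn.ne', rpow_natCast]
  have := rpow_le_rpow (by positivity) h hn.le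
  rwa [mul_rpow (by positivity) (by positivity), mul_rpow (by positivity) (by positivity),
    hpow hp₀, hpow (sub_nonneg.2 hp₁), hpow (by positivity), hpow (by positivity)] at this

theorem choose_mul_pow_mul_one_sub_pow_le {k m : ℕ} (hk : k ≠ 0) (hm : m ≠ 0) {p : ℝ}
    (hp₀ : 0 ≤ p) (hp₁ : p ≤ 1) :
    ((k + m).choose k : ℝ) * p ^ k * (1 - p) ^ m ≤ √((k + m) / (2 * π * k * m)) := by
  have hcancel :
      ((k + m) / k : ℝ) ^ k * ((k + m) / m) ^ m * ((k / (k + m)) ^ k * (m / (k + m)) ^ m)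
        = 1 := by
    rw [← inv_div (k : ℝ), ← inv_div (m : ℝ), inv_pow, inv_pow, mul_mul_mul_comm,
      inv_mul_cancel₀, inv_mul_cancel₀, one_mul] <;> positivity
  calc ((k + m).choose k : ℝ) * p ^ k * (1 - p) ^ m
      = (k + m).choose k * (p ^ k * (1 - p) ^ m) := mul_assoc _ _ _
    _ ≤ √((k + m) / (2 * π * k * m)) * (((k + m) / k) ^ k * ((k + m) / m) ^ m) *
        ((k / (k + m)) ^ k * (m / (k + m)) ^ m) :=
      mul_le_mul (choose_le_sqrt_mul_pow hk hm) (pow_mul_one_sub_pow_le hk hm hp₀ hp₁)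
        (by positivity) (by positivity)
    _ = √((k + m) / (2 * π * k * m)) := by rw [mul_assoc, hcancel, mul_one]

/-- For truncation weights (`w_k = 1/μ` for `k ≤ μ`, else `0`) with `3 ≤ μ ≤ λ-2`,
the Lipschitz constant
`L₁ = sup_{0<p<1} ((λ-1)/μ) C(λ-2, μ-1) p^(μ-1)(1-p)^(λ-μ-1)` satisfies
`L₁ ≤ ((λ-1)/μ) √((λ-2)/(2π(μ-1)(λ-μ-1)))`. -/
theorem L1_truncation_bound (lam mu : ℕ) (hmu : 3 ≤ mu) (hmulam : mu ≤ lam - 2)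
    (L1 : ℝ)
    (hL1 : L1 = ⨆ p : Set.Ioo (0 : ℝ) 1,
      ((lam : ℝ) - 1) / mu * ((lam - 2).choose (mu - 1) : ℝ) *
        (p : ℝ) ^ (mu - 1) * (1 - (p : ℝ)) ^ (lam - mu - 1)) :
    L1 ≤ ((lam : ℝ) - 1) / mu *
      Real.sqrt (((lam : ℝ) - 2) / (2 * Real.pi * ((mu : ℝ) - 1) * ((lam : ℝ) - mu - 1))) := by
  obtain ⟨k, rfl⟩ : ∃ k, mu = k + 1 := ⟨mu - 1, by omega⟩
  obtain ⟨m, rfl⟩ : ∃ m, lam = k + m + 2 := ⟨lam - k - 2, by omega⟩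
  have hk : k ≠ 0 := by omega
  have hm : m ≠ 0 := by omega
  have : Nonempty (Set.Ioo (0 : ℝ) 1) := ⟨⟨1 / 2, by norm_num⟩⟩
  rw [hL1]
  refine ciSup_le fun ⟨p, hp₀, hp₁⟩ ↦ ?_
  set c : ℝ := ((k + m + 2 : ℕ) - 1) / (k + 1 : ℕ)
  have hc : 0 ≤ c := div_nonneg (by push_cast; linarith) (cast_nonneg _)
  have hexp : k + m + 2 - (k + 1) - 1 = m := by omega
  calc _ = c * ((k + m).choose k * p ^ k * (1 - p) ^ m) := by
        rw [hexp]; simp only [Nat.add_sub_cancel]; ring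
    _ ≤ c * √((k + m) / (2 * π * k * m)) :=
      mul_le_mul_of_nonneg_left (choose_mul_pow_mul_one_sub_pow_le hk hm hp₀.le hp₁.le) hc
    _ = _ := by push_cast; ring_nf
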